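/- arXiv:1903.07035 — 2 statements merged into one kernel-verified Lean document; each statement's English description precedes it below -/
import Mathlib

section
/- The Jacobi identity for theta functions: θ'(0,τ) = π · θ₁(0,τ) · θ₂(0,τ) · θ₃(0,τ), where θ'(0,τ) denotes the derivative of θ(v,τ) in v evaluated at v=0. -/
open Complex

/-- The nome `q = e^{2πiτ}`. -/
noncomputable def jq (τ : ℂ) : ℂ := Complex.exp (2 * Real.pi * Complex.I * τ)

/-- Jacobi theta function `θ(v,τ)` defined by its infinite product. -/
noncomputable def jtheta (v τ : ℂ) : ℂ :=
  2 * Complex.exp (Real.pi * Complex.I * τ / 4) * Complex.sin (Real.pi * v) *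
    ∏' n : ℕ, ((1 - jq τ ^ (n + 1)) *
      (1 - Complex.exp (2 * Real.pi * Complex.I * v) * jq τ ^ (n + 1)) *
      (1 - Complex.exp (-(2 * Real.pi * Complex.I * v)) * jq τ ^ (n + 1)))

/-- Jacobi theta function `θ₁(v,τ)` defined by its infinite product. -/
noncomputable def jtheta1 (v τ : ℂ) : ℂ :=
  2 * Complex.exp (Real.pi * Complex.I * τ / 4) * Complex.cos (Real.pi * v) *
    ∏' n : ℕ, ((1 - jq τ ^ (n + 1)) *
      (1 + Complex.exp (2 * Real.pi * Complex.I * v) * jq τ ^ (n + 1)) *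
      (1 + Complex.exp (-(2 * Real.pi * Complex.I * v)) * jq τ ^ (n + 1)))

/-- Jacobi theta function `θ₂(v,τ)` defined by its infinite product;
`q^{j-1/2} = e^{πiτ(2j-1)}`. -/
noncomputable def jtheta2 (v τ : ℂ) : ℂ :=
  ∏' n : ℕ, ((1 - jq τ ^ (n + 1)) *
    (1 - Complex.exp (2 * Real.pi * Complex.I * v) *
      Complex.exp (Real.pi * Complex.I * τ) ^ (2 * n + 1)) *
    (1 - Complex.exp (-(2 * Real.pi * Complex.I * v)) *
      Complex.exp (Real.pi * Complex.I * τ) ^ (2 * n + 1)))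

/-- Jacobi theta function `θ₃(v,τ)` defined by its infinite product. -/
noncomputable def jtheta3 (v τ : ℂ) : ℂ :=
  ∏' n : ℕ, ((1 - jq τ ^ (n + 1)) *
    (1 + Complex.exp (2 * Real.pi * Complex.I * v) *
      Complex.exp (Real.pi * Complex.I * τ) ^ (2 * n + 1)) *
    (1 + Complex.exp (-(2 * Real.pi * Complex.I * v)) *
      Complex.exp (Real.pi * Complex.I * τ) ^ (2 * n + 1)))

/-!
Write `q = w²` with `w = e^{πiτ}`. For every `v` the three products in `θ(v,τ)` converge, so
`θ(v,τ) = sin(πv) · G(v)` with `G(v) = 2q^{1/8} ∏(1 - qʲ)(1 - e^{2πiv}qʲ)(1 - e^{-2πiv}qʲ)`;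
`z ↦ ∏(1 - z qʲ)` is entire (locally uniform convergence), hence
`θ'(0,τ) = π G(0) = 2π q^{1/8} ∏(1 - qʲ)³`. At `v = 0` the product `θ₁θ₂θ₃` equals the same
`2q^{1/8} ∏(1 - qʲ)³` times `(∏(1 + w^{2j}) ∏(1 + w^{2j-1}) ∏(1 - w^{2j-1}))²`, and this last
product is `1` by Euler's identity `∏(1 + wʲ) ∏(1 - w^{2j-1}) = 1`: multiplying it by
`∏(1 - w^{2j})` gives `∏(1 + wʲ)(1 - wʲ) = ∏(1 - w^{2j})`.
-/

open Function

lemma Nat.injective_two_mul_add (k : ℕ) : Injective fun n : ℕ ↦ 2 * n + k :=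
  fun a b h ↦ by simp only at h; omega

theorem Multipliable.tprod_mul_mul {ι α : Type*} [CommMonoid α] [TopologicalSpace α]
    [ContinuousMul α] [T2Space α] {f g h : ι → α} (hf : Multipliable f) (hg : Multipliable g)
    (hh : Multipliable h) : ∏' i, f i * g i * h i = (∏' i, f i) * (∏' i, g i) * ∏' i, h i := by
  rw [(hf.mul hg).tprod_mul hh, hf.tprod_mul hg]

section PowerProducts

variable {K : Type*} [NormedField K] {w : K}

lemma summable_norm_mul_pow_comp (hw : ‖w‖ < 1) {e : ℕ → ℕ} (he : Injective e) (c : K) :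
    Summable fun n ↦ ‖c * w ^ e n‖ := by
  simpa [norm_mul, norm_pow] using
    ((summable_geometric_of_lt_one (norm_nonneg w) hw).comp_injective he).mul_left ‖c‖

variable [CompleteSpace K]

lemma multipliable_one_add_mul_pow_comp (hw : ‖w‖ < 1) {e : ℕ → ℕ} (he : Injective e) (c : K) :
    Multipliable fun n ↦ 1 + c * w ^ e n :=
  multipliable_one_add_of_summable (summable_norm_mul_pow_comp hw he c)

lemma multipliable_one_sub_mul_pow_comp (hw : ‖w‖ < 1) {e : ℕ → ℕ} (he : Injective e) (c : K) :
    Multipliable fun n ↦ 1 - c * w ^ e n := by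
  simpa [sub_eq_add_neg] using multipliable_one_add_mul_pow_comp hw he (-c)

lemma multipliable_one_add_pow_comp (hw : ‖w‖ < 1) {e : ℕ → ℕ} (he : Injective e) :
    Multipliable fun n ↦ 1 + w ^ e n := by
  simpa using multipliable_one_add_mul_pow_comp hw he 1

lemma multipliable_one_sub_pow_comp (hw : ‖w‖ < 1) {e : ℕ → ℕ} (he : Injective e) :
    Multipliable fun n ↦ 1 - w ^ e n := by
  simpa using multipliable_one_sub_mul_pow_comp hw he 1

lemma tprod_one_add_mul_pow_succ (hw : ‖w‖ < 1) (c : K) :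
    ∏' n : ℕ, (1 + c * w ^ (n + 1)) =
      (∏' n : ℕ, (1 + c * w ^ (2 * n + 1))) * ∏' n : ℕ, (1 + c * w ^ (2 * n + 2)) :=
  (tprod_even_mul_odd (f := fun n ↦ 1 + c * w ^ (n + 1))
    (multipliable_one_add_mul_pow_comp hw (Nat.injective_two_mul_add 1) c)
    (multipliable_one_add_mul_pow_comp hw (Nat.injective_two_mul_add 2) c)).symm

lemma tprod_one_sub_pow_two_mul_add_two_ne_zero (hw : ‖w‖ < 1) :
    ∏' n : ℕ, (1 - w ^ (2 * n + 2)) ≠ 0 := by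
  have hne (n : ℕ) : 1 + -w ^ (2 * n + 2) ≠ 0 := by
    rw [← sub_eq_add_neg, sub_ne_zero]
    intro h
    have hlt := pow_lt_one₀ (norm_nonneg w) hw (n := 2 * n + 2) (by omega)
    rw [← norm_pow, ← h, norm_one] at hlt
    exact lt_irrefl 1 hlt
  simpa [sub_eq_add_neg] using tprod_one_add_ne_zero_of_summable hne
    (by simpa using summable_norm_mul_pow_comp hw (Nat.injective_two_mul_add 2) (-1))

lemma tprod_one_add_pow_succ_mul_tprod_one_sub_pow_odd (hw : ‖w‖ < 1) :
    (∏' n : ℕ, (1 + w ^ (n + 1))) * ∏' n : ℕ, (1 - w ^ (2 * n + 1)) = 1 := by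
  have hsucc : Injective fun n : ℕ ↦ n + 1 := add_left_injective 1
  have hsquare : (∏' n : ℕ, (1 + w ^ (n + 1))) * ∏' n : ℕ, (1 - w ^ (n + 1)) =
      ∏' n : ℕ, (1 - w ^ (2 * n + 2)) := by
    rw [← (multipliable_one_add_pow_comp hw hsucc).tprod_mul
      (multipliable_one_sub_pow_comp hw hsucc)]
    exact tprod_congr fun n ↦ by ring
  have hsplit : ∏' n : ℕ, (1 - w ^ (n + 1)) =
      (∏' n : ℕ, (1 - w ^ (2 * n + 1))) * ∏' n : ℕ, (1 - w ^ (2 * n + 2)) := by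
    simpa [← sub_eq_add_neg] using tprod_one_add_mul_pow_succ hw (-1)
  apply mul_right_cancel₀ (tprod_one_sub_pow_two_mul_add_two_ne_zero hw)
  calc _ = (∏' n : ℕ, (1 + w ^ (n + 1))) * ∏' n : ℕ, (1 - w ^ (n + 1)) := by rw [hsplit]; ring
    _ = _ := by rw [hsquare, one_mul]

lemma tprod_one_add_pow_even_mul_odd_mul_one_sub_pow_odd (hw : ‖w‖ < 1) :
    (∏' n : ℕ, (1 + w ^ (2 * n + 2))) * (∏' n : ℕ, (1 + w ^ (2 * n + 1))) *
      ∏' n : ℕ, (1 - w ^ (2 * n + 1)) = 1 := by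
  have hsplit := tprod_one_add_mul_pow_succ hw 1
  simp only [one_mul] at hsplit
  calc _ = (∏' n : ℕ, (1 + w ^ (n + 1))) * ∏' n : ℕ, (1 - w ^ (2 * n + 1)) := by
        rw [hsplit]; ring
    _ = 1 := tprod_one_add_pow_succ_mul_tprod_one_sub_pow_odd hw

end PowerProducts

lemma differentiable_tprod_one_sub_mul_pow_comp {w : ℂ} (hw : ‖w‖ < 1) {e : ℕ → ℕ}
    (he : Injective e) : Differentiable ℂ fun z ↦ ∏' n, (1 - z * w ^ e n) := by
  intro z
  have hU : HasProdLocallyUniformlyOn (fun n z ↦ 1 - z * w ^ e n)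
      (fun z ↦ ∏' n, (1 - z * w ^ e n)) (Metric.ball 0 (‖z‖ + 1)) := by
    simp_rw [sub_eq_add_neg]
    refine (summable_norm_mul_pow_comp hw he ((‖z‖ + 1 : ℝ) : ℂ)).hasProdLocallyUniformlyOn_one_add
      Metric.isOpen_ball (.of_forall fun n y hy ↦ ?_) fun n ↦ by fun_prop
    rw [mem_ball_zero_iff] at hy
    simp only [norm_neg, norm_mul, norm_real, Real.norm_eq_abs]
    gcongr
    exact hy.le.trans (le_abs_self _)
  have hpartial (s : Finset ℕ) :
      DifferentiableOn ℂ (fun z ↦ ∏ n ∈ s, (1 - z * w ^ e n)) (Metric.ball 0 (‖z‖ + 1)) := by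
    fun_prop
  have hdiff := hU.differentiableOn (.of_forall hpartial) Metric.isOpen_ball
  exact hdiff.differentiableAt (Metric.isOpen_ball.mem_nhds (by simp))

section Theta

variable {τ : ℂ}

lemma norm_cexp_pi_I_mul_lt_one (hτ : 0 < τ.im) : ‖cexp (Real.pi * I * τ)‖ < 1 := by
  rw [norm_exp, Real.exp_lt_one_iff]
  simpa [mul_re, mul_im] using mul_pos Real.pi_pos hτ

lemma jq_eq_sq (τ : ℂ) : jq τ = cexp (Real.pi * I * τ) ^ 2 := by
  rw [jq, ← exp_nat_mul]
  ring_nf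

lemma jq_pow_succ (τ : ℂ) (n : ℕ) : jq τ ^ (n + 1) = cexp (Real.pi * I * τ) ^ (2 * n + 2) := by
  rw [jq_eq_sq, ← pow_mul]
  ring_nf

lemma norm_jq_lt_one (hτ : 0 < τ.im) : ‖jq τ‖ < 1 := by
  rw [jq_eq_sq, norm_pow]
  exact pow_lt_one₀ (norm_nonneg _) (norm_cexp_pi_I_mul_lt_one hτ) two_ne_zero

lemma jtheta_eq_sin_mul (hτ : 0 < τ.im) (v : ℂ) :
    jtheta v τ = sin (Real.pi * v) * (2 * cexp (Real.pi * I * τ / 4) *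
      ((∏' n : ℕ, (1 - jq τ ^ (n + 1))) *
        (∏' n : ℕ, (1 - cexp (2 * Real.pi * I * v) * jq τ ^ (n + 1))) *
        ∏' n : ℕ, (1 - cexp (-(2 * Real.pi * I * v)) * jq τ ^ (n + 1)))) := by
  have hq := norm_jq_lt_one hτ
  have hsucc : Injective fun n : ℕ ↦ n + 1 := add_left_injective 1
  rw [jtheta, Multipliable.tprod_mul_mul (multipliable_one_sub_pow_comp hq hsucc)
    (multipliable_one_sub_mul_pow_comp hq hsucc _) (multipliable_one_sub_mul_pow_comp hq hsucc _)]
  ring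

lemma hasDerivAt_jtheta_zero (hτ : 0 < τ.im) :
    HasDerivAt (fun v ↦ jtheta v τ)
      (Real.pi * (2 * cexp (Real.pi * I * τ / 4) * (∏' n : ℕ, (1 - jq τ ^ (n + 1))) ^ 3)) 0 := by
  have hF := differentiable_tprod_one_sub_mul_pow_comp (norm_jq_lt_one hτ) (add_left_injective 1)
  have hsin : HasDerivAt (fun v : ℂ ↦ sin (Real.pi * v)) Real.pi 0 := by
    simpa using ((hasDerivAt_id (0 : ℂ)).const_mul (Real.pi : ℂ)).csin
  have hplus : DifferentiableAt ℂ
      (fun v : ℂ ↦ ∏' n : ℕ, (1 - cexp (2 * Real.pi * I * v) * jq τ ^ (n + 1))) 0 :=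
    (hF _).comp 0 (by fun_prop)
  have hminus : DifferentiableAt ℂ
      (fun v : ℂ ↦ ∏' n : ℕ, (1 - cexp (-(2 * Real.pi * I * v)) * jq τ ^ (n + 1))) 0 :=
    (hF _).comp 0 (by fun_prop)
  have hrest : DifferentiableAt ℂ (fun v : ℂ ↦ 2 * cexp (Real.pi * I * τ / 4) *
      ((∏' n : ℕ, (1 - jq τ ^ (n + 1))) *
        (∏' n : ℕ, (1 - cexp (2 * Real.pi * I * v) * jq τ ^ (n + 1))) *
        ∏' n : ℕ, (1 - cexp (-(2 * Real.pi * I * v)) * jq τ ^ (n + 1)))) 0 := by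
    fun_prop
  rw [funext (jtheta_eq_sin_mul hτ)]
  refine (hsin.mul hrest.hasDerivAt).congr_deriv ?_
  simp only [mul_zero, neg_zero, exp_zero, one_mul, sin_zero, zero_mul, add_zero]
  ring

lemma jtheta1_zero (hτ : 0 < τ.im) :
    jtheta1 0 τ = 2 * cexp (Real.pi * I * τ / 4) *
      ((∏' n : ℕ, (1 - jq τ ^ (n + 1))) * (∏' n : ℕ, (1 + jq τ ^ (n + 1))) ^ 2) := by
  have hq := norm_jq_lt_one hτ
  have hsucc : Injective fun n : ℕ ↦ n + 1 := add_left_injective 1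
  simp only [jtheta1, mul_zero, neg_zero, exp_zero, one_mul, cos_zero, mul_one]
  rw [Multipliable.tprod_mul_mul (multipliable_one_sub_pow_comp hq hsucc)
    (multipliable_one_add_pow_comp hq hsucc) (multipliable_one_add_pow_comp hq hsucc)]
  ring

lemma jtheta2_zero (hτ : 0 < τ.im) :
    jtheta2 0 τ = (∏' n : ℕ, (1 - jq τ ^ (n + 1))) *
      (∏' n : ℕ, (1 - cexp (Real.pi * I * τ) ^ (2 * n + 1))) ^ 2 := by
  have hodd := Nat.injective_two_mul_add 1
  have hw := norm_cexp_pi_I_mul_lt_one hτ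
  simp only [jtheta2, mul_zero, neg_zero, exp_zero, one_mul]
  rw [Multipliable.tprod_mul_mul (multipliable_one_sub_pow_comp (norm_jq_lt_one hτ)
    (add_left_injective 1)) (multipliable_one_sub_pow_comp hw hodd)
    (multipliable_one_sub_pow_comp hw hodd)]
  ring

lemma jtheta3_zero (hτ : 0 < τ.im) :
    jtheta3 0 τ = (∏' n : ℕ, (1 - jq τ ^ (n + 1))) *
      (∏' n : ℕ, (1 + cexp (Real.pi * I * τ) ^ (2 * n + 1))) ^ 2 := by
  have hodd := Nat.injective_two_mul_add 1
  have hw := norm_cexp_pi_I_mul_lt_one hτ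
  simp only [jtheta3, mul_zero, neg_zero, exp_zero, one_mul]
  rw [Multipliable.tprod_mul_mul (multipliable_one_sub_pow_comp (norm_jq_lt_one hτ)
    (add_left_injective 1)) (multipliable_one_add_pow_comp hw hodd)
    (multipliable_one_add_pow_comp hw hodd)]
  ring

lemma jtheta1_mul_jtheta2_mul_jtheta3_zero (hτ : 0 < τ.im) :
    jtheta1 0 τ * jtheta2 0 τ * jtheta3 0 τ =
      2 * cexp (Real.pi * I * τ / 4) * (∏' n : ℕ, (1 - jq τ ^ (n + 1))) ^ 3 := by
  have heuler :=
    tprod_one_add_pow_even_mul_odd_mul_one_sub_pow_odd (norm_cexp_pi_I_mul_lt_one hτ)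
  simp only [← jq_pow_succ] at heuler
  rw [jtheta1_zero hτ, jtheta2_zero hτ, jtheta3_zero hτ]
  set P := ∏' n : ℕ, (1 - jq τ ^ (n + 1))
  set A := ∏' n : ℕ, (1 + jq τ ^ (n + 1))
  set B := ∏' n : ℕ, (1 - cexp (Real.pi * I * τ) ^ (2 * n + 1))
  set C := ∏' n : ℕ, (1 + cexp (Real.pi * I * τ) ^ (2 * n + 1))
  linear_combination 2 * cexp (Real.pi * I * τ / 4) * P ^ 3 * (A * C * B + 1) * heuler

end Theta

/-- Jacobi identity: `θ'(0,τ) = π θ₁(0,τ) θ₂(0,τ) θ₃(0,τ)`. -/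
theorem jacobi_identity (τ : ℂ) (hτ : 0 < τ.im) :
    deriv (fun v => jtheta v τ) 0 =
      (Real.pi : ℂ) * jtheta1 0 τ * jtheta2 0 τ * jtheta3 0 τ := by
  rw [(hasDerivAt_jtheta_zero hτ).deriv, ← jtheta1_mul_jtheta2_mul_jtheta3_zero hτ]
  ring
end

section
/- For finite-dimensional vector spaces U and V over a field of characteristic zero, the dimension of Λⁿ(U⊗V) equals dim(U⊗V) choose n, and moreover in the special case n = 2 one has Λ²(U⊗V) ≅ (Sym²U ⊗ Λ²V) ⊕ (Λ²U ⊗ Sym²V). -/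
/-!
For `n = 2` both sides are finite-dimensional, so it suffices to compare dimensions. The kernel of
`U ⊗ U → Sym²U` is the image of the antisymmetrization `⋀²U → U ⊗ U`, `u ∧ v ↦ u ⊗ v - v ⊗ u`,
which is injective in characteristic `≠ 2` because following it by `u ⊗ v ↦ u ∧ v` is
multiplication by `2`. Hence `dim Sym²U = C(d + 1, 2)` for `d = dim U`, and the dimension count
`C(uv, 2) = C(u + 1, 2) C(v, 2) + C(u, 2) C(v + 1, 2)` finishes.
-/

open TensorProduct

/-- The second symmetric power `Sym²U` of a module, as the quotient of `U ⊗ U` by the span of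
the elements `u ⊗ v - v ⊗ u`. -/
def SymSq (k U : Type*) [CommRing k] [AddCommGroup U] [Module k U] : Type _ :=
  (U ⊗[k] U) ⧸
    (Submodule.span k {x : U ⊗[k] U | ∃ u v : U, x = u ⊗ₜ[k] v - v ⊗ₜ[k] u})

noncomputable instance (k U : Type*) [CommRing k] [AddCommGroup U] [Module k U] :
    AddCommGroup (SymSq k U) :=
  Submodule.Quotient.addCommGroup _

noncomputable instance (k U : Type*) [CommRing k] [AddCommGroup U] [Module k U] :
    Module k (SymSq k U) :=
  Submodule.Quotient.module _

lemma Nat.choose_two_add_succ_choose_two (d : ℕ) : d.choose 2 + (d + 1).choose 2 = d * d := by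
  have key : (d.choose 2 : ℚ) + (d + 1 : ℕ).choose 2 = d * d := by
    push_cast [Nat.cast_choose_two]
    ring
  exact_mod_cast key

lemma Nat.choose_two_mul (u v : ℕ) :
    (u * v).choose 2 = (u + 1).choose 2 * v.choose 2 + u.choose 2 * (v + 1).choose 2 := by
  have key : ((u * v).choose 2 : ℚ) =
      (u + 1 : ℕ).choose 2 * v.choose 2 + u.choose 2 * (v + 1 : ℕ).choose 2 := by
    push_cast [Nat.cast_choose_two]
    ring
  exact_mod_cast key

namespace exteriorPower

variable (R M : Type*) [CommRing R] [AddCommGroup M] [Module R M]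

noncomputable def antisymmetrize : ⋀[R]^2 M →ₗ[R] M ⊗[R] M :=
  alternatingMapLinearEquiv
    { toFun v := v 0 ⊗ₜ v 1 - v 1 ⊗ₜ v 0
      map_update_add' v i x y := by fin_cases i <;> simp [add_tmul, tmul_add] <;> abel
      map_update_smul' v i c x := by fin_cases i <;> simp [smul_tmul, tmul_smul, smul_sub]
      map_eq_zero_of_eq' v i j hv hij := by fin_cases i <;> fin_cases j <;> simp_all }

noncomputable def wedge : M ⊗[R] M →ₗ[R] ⋀[R]^2 M :=
  TensorProduct.lift (LinearMap.mk₂ R (fun u v => ιMulti R 2 ![u, v])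
    (fun u u' v => AlternatingMap.map_vecCons_add _ _ _ _)
    (fun c u v => AlternatingMap.map_vecCons_smul _ _ _ _)
    (fun u v v' => by
      convert (ιMulti R 2).map_update_add ![u, v] 1 v v' using 3 <;>
        (funext i; fin_cases i <;> rfl))
    (fun c u v => by
      convert (ιMulti R 2).map_update_smul ![u, v] 1 c v using 3 <;>
        (funext i; fin_cases i <;> rfl)))

variable {R M}

@[simp]
lemma antisymmetrize_ιMulti (v : Fin 2 → M) :
    antisymmetrize R M (ιMulti R 2 v) = v 0 ⊗ₜ v 1 - v 1 ⊗ₜ v 0 :=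
  alternatingMapLinearEquiv_apply_ιMulti _ _

@[simp]
lemma wedge_tmul (u v : M) : wedge R M (u ⊗ₜ v) = ιMulti R 2 ![u, v] :=
  rfl

lemma wedge_comp_antisymmetrize : wedge R M ∘ₗ antisymmetrize R M = (2 : R) • LinearMap.id := by
  ext v
  have hv : ![v 0, v 1] = v := by funext i; fin_cases i <;> rfl
  have hswap : ![v 1, v 0] = v ∘ Equiv.swap 0 1 := by funext i; fin_cases i <;> rfl
  simp [hv, hswap, AlternatingMap.map_swap, two_smul]

lemma antisymmetrize_injective (h2 : IsUnit (2 : R)) : Function.Injective (antisymmetrize R M) := by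
  intro x y hxy
  have h := congrArg (wedge R M) hxy
  simp only [← LinearMap.comp_apply, wedge_comp_antisymmetrize] at h
  exact h2.smul_left_cancel.mp h

lemma range_antisymmetrize :
    LinearMap.range (antisymmetrize R M) =
      Submodule.span R {x : M ⊗[R] M | ∃ u v : M, x = u ⊗ₜ[R] v - v ⊗ₜ[R] u} := by
  rw [LinearMap.range_eq_map, ← ιMulti_span, Submodule.map_span, ← Set.range_comp]
  congr 1
  ext x
  constructor
  · rintro ⟨v, rfl⟩
    exact ⟨v 0, v 1, antisymmetrize_ιMulti v⟩
  · rintro ⟨u, v, rfl⟩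
    exact ⟨![u, v], antisymmetrize_ιMulti _⟩

end exteriorPower

instance (R U : Type*) [CommRing R] [AddCommGroup U] [Module R U] [Module.Finite R U] :
    Module.Finite R (SymSq R U) :=
  inferInstanceAs (Module.Finite R ((U ⊗[R] U) ⧸
    (Submodule.span R {x : U ⊗[R] U | ∃ u v : U, x = u ⊗ₜ[R] v - v ⊗ₜ[R] u})))

lemma finrank_symSq (k U : Type*) [Field k] [AddCommGroup U] [Module k U]
    [FiniteDimensional k U] (h2 : (2 : k) ≠ 0) :
    Module.finrank k (SymSq k U) = (Module.finrank k U + 1).choose 2 := by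
  have hW : Module.finrank k
      (Submodule.span k {x : U ⊗[k] U | ∃ u v : U, x = u ⊗ₜ[k] v - v ⊗ₜ[k] u}) =
        (Module.finrank k U).choose 2 := by
    rw [← exteriorPower.range_antisymmetrize, LinearMap.finrank_range_of_inj
      (exteriorPower.antisymmetrize_injective h2.isUnit), exteriorPower.finrank_eq]
  have h := Submodule.finrank_quotient_add_finrank
    (Submodule.span k {x : U ⊗[k] U | ∃ u v : U, x = u ⊗ₜ[k] v - v ⊗ₜ[k] u})
  rw [hW, Module.finrank_tensorProduct, ← Nat.choose_two_add_succ_choose_two, add_comm] at h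
  exact Nat.add_left_cancel h

/-- For finite-dimensional vector spaces `U`, `V` over a field of characteristic zero,
`dim Λⁿ(U ⊗ V) = (dim(U ⊗ V)).choose n`, and moreover
`Λ²(U ⊗ V) ≅ (Sym²U ⊗ Λ²V) ⊕ (Λ²U ⊗ Sym²V)` (the `n = 2` Cauchy decomposition). -/
theorem exteriorPower_tensor (k U V : Type*) [Field k] [CharZero k]
    [AddCommGroup U] [Module k U] [AddCommGroup V] [Module k V]
    [FiniteDimensional k U] [FiniteDimensional k V] (n : ℕ) :
    Module.finrank k (⋀[k]^n (U ⊗[k] V)) =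
        Nat.choose (Module.finrank k (U ⊗[k] V)) n ∧
      Nonempty ((⋀[k]^2 (U ⊗[k] V)) ≃ₗ[k]
        ((SymSq k U ⊗[k] ↥(⋀[k]^2 V)) × (↥(⋀[k]^2 U) ⊗[k] SymSq k V))) := by
  refine ⟨exteriorPower.finrank_eq k n, ⟨LinearEquiv.ofFinrankEq _ _ ?_⟩⟩
  simp only [exteriorPower.finrank_eq, Module.finrank_prod, Module.finrank_tensorProduct,
    finrank_symSq _ _ two_ne_zero]
  exact Nat.choose_two_mul _ _
end
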